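/- For all real a > 0 and b > 0, ∫_0^∞ e^{−a t} · J_1(b t) · t^{−1} dt = (√(b² + a²) − a)/b, where J_1(y) = ∑_{m=0}^∞ (−1)^m/(m!·Γ(m+2))·(y/2)^{2m+1}. -/

import Mathlib

/-!
Expanding `cos (y cos θ)` in its power series and integrating termwise against `sin θ ^ 2` with
Wallis' integrals gives Poisson's integral `J₁(y) = (y/π) ∫₀^π cos (y cos θ) sin² θ dθ`.
Substituting it and swapping the integrals (the integrand is dominated by `e^{-at}`), the
`t`-integral is the Laplace transform `a / (a² + b² cos² θ)` of `cos (b cos θ · t)`. Since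
`a² + b² cos² θ = s² cos² θ + a² sin² θ` with `s = √(a² + b²)`, what is left is the classical
`∫₀^π p q / (p² cos² θ + q² sin² θ) dθ = π`.
-/

open Real MeasureTheory

/-- The Bessel function of the first kind of order 1, defined by its series. -/
noncomputable def besselJ1 (y : ℝ) : ℝ :=
  ∑' m : ℕ, (-1) ^ m / (m.factorial * Real.Gamma (m + 2)) * (y / 2) ^ (2 * m + 1)

open Set
open scoped Nat

theorem integral_cos_pow_even (n : ℕ) :
    ∫ x in 0..π, cos x ^ (2 * n) = π * (2 * n)! / (4 ^ n * (n ! : ℝ) ^ 2) := by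
  induction n with
  | zero => simp
  | succ n ih =>
    rw [Nat.mul_succ, integral_cos_pow, ih]
    simp only [sin_zero, sin_pi, mul_zero, sub_zero, zero_div, zero_add]
    rw [show 2 * n + 2 = (2 * n + 1) + 1 by ring]
    push_cast [Nat.factorial_succ]
    field_simp
    ring

theorem integral_cos_pow_mul_sin_sq (n : ℕ) :
    ∫ x in 0..π, cos x ^ n * sin x ^ 2 = (∫ x in 0..π, cos x ^ n) / (n + 2) := by
  have hsub : ∫ x in 0..π, cos x ^ n * sin x ^ 2
      = (∫ x in 0..π, cos x ^ n) - ∫ x in 0..π, cos x ^ (n + 2) := by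
    rw [← intervalIntegral.integral_sub ((by fun_prop : Continuous _).intervalIntegrable _ _)
      ((by fun_prop : Continuous _).intervalIntegrable _ _)]
    congr 1 with x
    rw [sin_sq]; ring
  rw [hsub, integral_cos_pow]
  simp only [sin_zero, sin_pi, mul_zero, sub_zero, zero_div, zero_add]
  field_simp
  ring

theorem hasSum_integral_cos_mul_cos_mul_sin_sq (y : ℝ) :
    HasSum (fun n : ℕ => ∫ θ in 0..π, (-1) ^ n * (y * cos θ) ^ (2 * n) / (2 * n)! * sin θ ^ 2)
      (∫ θ in 0..π, cos (y * cos θ) * sin θ ^ 2) := by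
  refine intervalIntegral.hasSum_integral_of_dominated_convergence
    (fun n _ => |y| ^ (2 * n) / (2 * n)!) (fun n => by fun_prop) (fun n => ae_of_all _ ?_)
    (ae_of_all _ fun _ _ => ?_) intervalIntegrable_const
    (ae_of_all _ fun θ _ => (Real.hasSum_cos (y * cos θ)).mul_right (sin θ ^ 2))
  · intro θ _
    have hsin : sin θ ^ 2 ≤ 1 := by nlinarith [sin_sq_add_cos_sq θ, sq_nonneg (cos θ)]
    simp only [norm_mul, norm_div, norm_pow, norm_neg, norm_one, one_pow, one_mul,
      Real.norm_eq_abs, Nat.abs_cast, sq_abs]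
    calc (|y| * |cos θ|) ^ (2 * n) / (2 * n)! * sin θ ^ 2
        ≤ (|y| * 1) ^ (2 * n) / (2 * n)! * 1 := by gcongr; exact abs_cos_le_one θ
      _ = |y| ^ (2 * n) / (2 * n)! := by ring
  · exact (summable_pow_div_factorial |y|).comp_injective fun p q h => by omega

theorem besselJ1_eq_integral (y : ℝ) :
    besselJ1 y = y / π * ∫ θ in 0..π, cos (y * cos θ) * sin θ ^ 2 := by
  rw [besselJ1, ← ((hasSum_integral_cos_mul_cos_mul_sin_sq y).mul_left (y / π)).tsum_eq]
  refine tsum_congr fun n => ?_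
  have hterm : ∀ θ, (-1) ^ n * (y * cos θ) ^ (2 * n) / (2 * n)! * sin θ ^ 2
      = (-1) ^ n * y ^ (2 * n) / (2 * n)! * (cos θ ^ (2 * n) * sin θ ^ 2) := fun θ => by ring
  have hGamma : Gamma (n + 2) = (n + 1)! := by
    rw [show (n : ℝ) + 2 = (n + 1 : ℕ) + 1 by push_cast; ring, Gamma_nat_eq_factorial]
  simp_rw [hterm, intervalIntegral.integral_const_mul]
  rw [integral_cos_pow_mul_sin_sq, integral_cos_pow_even, hGamma,
    show (4 : ℝ) ^ n = 2 ^ (2 * n) by rw [pow_mul]; norm_num]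
  push_cast [Nat.factorial_succ, div_pow]
  field_simp
  ring

theorem integral_exp_neg_mul_mul_cos {a : ℝ} (ha : 0 < a) (c : ℝ) :
    ∫ t in Ioi 0, exp (-a * t) * cos (c * t) = a / (a ^ 2 + c ^ 2) := by
  have hre : (-a + c * Complex.I).re < 0 := by simpa using ha
  have h := congrArg (RCLike.re (K := ℂ)) (integral_exp_mul_complex_Ioi hre 0)
  rw [← integral_re (integrableOn_exp_mul_complex_Ioi hre 0)] at h
  convert h using 1
  · congr 1 with t
    simp [Complex.exp_re]
  · simp [Complex.div_re, Complex.normSq, ← sq]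

theorem mul_cos_sq_add_mul_sin_sq_pos {p q : ℝ} (hp : 0 < p) (hq : 0 < q) (θ : ℝ) :
    0 < p * cos θ ^ 2 + q * sin θ ^ 2 := by
  rcases le_total p q with h | h
  · nlinarith [sq_nonneg (sin θ), sin_sq_add_cos_sq θ]
  · nlinarith [sq_nonneg (cos θ), sin_sq_add_cos_sq θ]

/-- Up to multiples of `π` this antiderivative is `arctan (q * tan θ / p)`, but it is smooth on
all of `ℝ`. -/
theorem hasDerivAt_id_sub_arctan {p q : ℝ} (hp : 0 < p) (hq : 0 < q) (θ : ℝ) :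
    HasDerivAt (fun θ => θ - arctan ((p - q) * sin θ * cos θ / (p * cos θ ^ 2 + q * sin θ ^ 2)))
      (p * q / (p ^ 2 * cos θ ^ 2 + q ^ 2 * sin θ ^ 2)) θ := by
  have hpyth := sin_sq_add_cos_sq θ
  set N := (p - q) * sin θ * cos θ
  set D := p * cos θ ^ 2 + q * sin θ ^ 2
  set E := p ^ 2 * cos θ ^ 2 + q ^ 2 * sin θ ^ 2
  have hD : 0 < D := mul_cos_sq_add_mul_sin_sq_pos hp hq θ
  have hE : 0 < E := mul_cos_sq_add_mul_sin_sq_pos (pow_pos hp 2) (pow_pos hq 2) θ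
  have hN' : HasDerivAt (fun θ => (p - q) * sin θ * cos θ)
      ((p - q) * cos θ * cos θ + (p - q) * sin θ * -sin θ) θ :=
    ((hasDerivAt_sin θ).const_mul (p - q)).mul (hasDerivAt_cos θ)
  have hD' : HasDerivAt (fun θ => p * cos θ ^ 2 + q * sin θ ^ 2)
      (p * (2 * cos θ * -sin θ) + q * (2 * sin θ * cos θ)) θ := by
    refine ((((hasDerivAt_cos θ).pow 2).const_mul p).add
      (((hasDerivAt_sin θ).pow 2).const_mul q)).congr_deriv ?_
    ring
  have hquot : ((p - q) * cos θ * cos θ + (p - q) * sin θ * -sin θ) * D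
      - N * (p * (2 * cos θ * -sin θ) + q * (2 * sin θ * cos θ))
      = (p - q) * (p * cos θ ^ 2 - q * sin θ ^ 2) := by
    linear_combination (p - q) * (p * cos θ ^ 2 - q * sin θ ^ 2) * hpyth
  have hnorm : D ^ 2 + N ^ 2 = E := by linear_combination E * hpyth
  refine ((hasDerivAt_id θ).sub (hN'.div hD' hD.ne').arctan).congr_deriv ?_
  show 1 - 1 / (1 + (N / D) ^ 2) * ((((p - q) * cos θ * cos θ
    + (p - q) * sin θ * -sin θ) * D - N * (p * (2 * cos θ * -sin θ) + q * (2 * sin θ * cos θ)))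
      / D ^ 2) = p * q / E
  rw [hquot, show 1 / (1 + (N / D) ^ 2) * ((p - q) * (p * cos θ ^ 2 - q * sin θ ^ 2) / D ^ 2)
      = (p - q) * (p * cos θ ^ 2 - q * sin θ ^ 2) / (D ^ 2 + N ^ 2) by field_simp, hnorm]
  field_simp
  linear_combination (p * q) * hpyth

theorem continuous_div_sq_mul_cos_sq_add_sq_mul_sin_sq {p q : ℝ} (hp : 0 < p) (hq : 0 < q)
    (c : ℝ) : Continuous fun θ => c / (p ^ 2 * cos θ ^ 2 + q ^ 2 * sin θ ^ 2) :=
  continuous_const.div (by fun_prop) fun θ =>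
    (mul_cos_sq_add_mul_sin_sq_pos (pow_pos hp 2) (pow_pos hq 2) θ).ne'

theorem integral_mul_div_sq_mul_cos_sq_add_sq_mul_sin_sq {p q : ℝ} (hp : 0 < p) (hq : 0 < q) :
    ∫ θ in 0..π, p * q / (p ^ 2 * cos θ ^ 2 + q ^ 2 * sin θ ^ 2) = π := by
  rw [intervalIntegral.integral_eq_sub_of_hasDerivAt (fun θ _ => hasDerivAt_id_sub_arctan hp hq θ)
    ((continuous_div_sq_mul_cos_sq_add_sq_mul_sin_sq hp hq _).intervalIntegrable _ _)]
  simp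

theorem integral_sin_sq_mul_div {a b : ℝ} (ha : 0 < a) (hb : b ≠ 0) :
    ∫ θ in 0..π, sin θ ^ 2 * (a / (a ^ 2 + (b * cos θ) ^ 2))
      = π * (√(a ^ 2 + b ^ 2) - a) / b ^ 2 := by
  set s := √(a ^ 2 + b ^ 2)
  have hs : 0 < s := by positivity
  have hs2 : s ^ 2 = a ^ 2 + b ^ 2 := sq_sqrt (by positivity)
  have hpt : ∀ θ, sin θ ^ 2 * (a / (a ^ 2 + (b * cos θ) ^ 2))
      = s / b ^ 2 * (s * a / (s ^ 2 * cos θ ^ 2 + a ^ 2 * sin θ ^ 2)) - a / b ^ 2 := by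
    intro θ
    have hpyth := sin_sq_add_cos_sq θ
    have hden : s ^ 2 * cos θ ^ 2 + a ^ 2 * sin θ ^ 2 = a ^ 2 + (b * cos θ) ^ 2 := by
      linear_combination cos θ ^ 2 * hs2 + a ^ 2 * hpyth
    rw [hden]
    field_simp
    linear_combination b ^ 2 * hpyth - hs2
  simp_rw [hpt]
  rw [intervalIntegral.integral_sub
    (((continuous_div_sq_mul_cos_sq_add_sq_mul_sin_sq hs ha _).intervalIntegrable _ _).const_mul _)
    intervalIntegrable_const, intervalIntegral.integral_const_mul,
    integral_mul_div_sq_mul_cos_sq_add_sq_mul_sin_sq hs ha]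
  simp only [intervalIntegral.integral_const, sub_zero, smul_eq_mul]
  field_simp

theorem integrable_exp_neg_mul_mul_cos_mul_sin_sq {a : ℝ} (ha : 0 < a) (b : ℝ) :
    Integrable (fun p : ℝ × ℝ => exp (-a * p.1) * (cos (b * p.1 * cos p.2) * sin p.2 ^ 2))
      ((volume.restrict (Ioi 0)).prod (volume.restrict (Ioc 0 π))) := by
  refine ((exp_neg_integrableOn_Ioi 0 ha).mul_prod
    (integrableOn_const (C := (1 : ℝ)) measure_Ioc_lt_top.ne)).mono' (by fun_prop)
    (ae_of_all _ fun p => ?_)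
  have hsin : sin p.2 ^ 2 ≤ 1 := by nlinarith [sin_sq_add_cos_sq p.2, sq_nonneg (cos p.2)]
  simp only [norm_mul, Real.norm_eq_abs, abs_exp, abs_pow, sq_abs]
  calc exp (-a * p.1) * (|cos (b * p.1 * cos p.2)| * sin p.2 ^ 2)
      ≤ exp (-a * p.1) * (1 * 1) := by gcongr; exact abs_cos_le_one _
    _ = exp (-a * p.1) * 1 := by ring

theorem laplace_besselJ1 (a b : ℝ) (ha : 0 < a) (hb : 0 < b) :
    ∫ t in Set.Ioi (0:ℝ), Real.exp (-a * t) * besselJ1 (b * t) * t⁻¹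
      = (Real.sqrt (b ^ 2 + a ^ 2) - a) / b := by
  have hpoisson : ∀ t ∈ Ioi (0 : ℝ), exp (-a * t) * besselJ1 (b * t) * t⁻¹
      = b / π * ∫ θ in Ioc 0 π, exp (-a * t) * (cos (b * t * cos θ) * sin θ ^ 2) := by
    intro t (ht : 0 < t)
    rw [besselJ1_eq_integral, integral_const_mul, ← intervalIntegral.integral_of_le pi_pos.le]
    field_simp [ht.ne']
  have hlaplace : ∀ θ, ∫ t in Ioi 0, exp (-a * t) * (cos (b * t * cos θ) * sin θ ^ 2)
      = sin θ ^ 2 * (a / (a ^ 2 + (b * cos θ) ^ 2)) := fun θ => by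
    simp_rw [← mul_assoc, mul_right_comm b _ (cos θ)]
    rw [integral_mul_const, integral_exp_neg_mul_mul_cos ha, mul_comm]
  rw [setIntegral_congr_fun measurableSet_Ioi hpoisson, integral_const_mul,
    integral_integral_swap (integrable_exp_neg_mul_mul_cos_mul_sin_sq ha b)]
  simp_rw [hlaplace]
  rw [← intervalIntegral.integral_of_le pi_pos.le, integral_sin_sq_mul_div ha hb.ne', add_comm]
  field_simp
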